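/- For every integer n ≥ 0, the determinant of the n×n matrix D_n(3,1) equals (-1)ⁿ·(n+1)(n+2)/2. -/

import Mathlib

/-- The `n × n` matrix `D_n(a,b)`. -/
def Dmat (n : ℕ) (a b : ℝ) : Matrix (Fin n) (Fin n) ℝ :=
  Matrix.of fun i j =>
    if (i : ℕ) = (j : ℕ) then -a
    else if (i : ℕ) + 1 = (j : ℕ) then b
    else if (i : ℕ) = (j : ℕ) + 1 then a
    else if (i : ℕ) = (j : ℕ) + 2 then -b
    else 0

/-!
Replace the first column of `D_n(a,b)` by an arbitrary column `c`. The first row then has only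
two nonzero entries, `c 0` and `b`, and deleting the first row and the second column leaves
`D_{n-1}(a,b)` with the column `c` shifted up by one. Starting from the true first column
`(-a, a, -b, 0, …)` and shifting three times yields the recurrence
`d_{n+3} = -a d_{n+2} - a b d_{n+1} - b³ d_n` for `d_n = det D_n(a,b)`.
For `(a, b) = (3, 1)` its characteristic polynomial is `(x + 1)³`, so `(-1)ⁿ d_n` is a quadratic
polynomial in `n`, fixed by `d_0 = 1`, `d_1 = -3`, `d_2 = 6`.
-/

open Matrix

lemma submatrix_succ_updateCol_zero {l m α : Type*} {n : ℕ} (A : Matrix m (Fin (n + 1)) α)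
    (v : m → α) (f : l → m) :
    (A.updateCol 0 v).submatrix f Fin.succ = A.submatrix f Fin.succ := by
  simpa using submatrix_updateCol_succAbove A v f 0

lemma Dmat_submatrix_succ_succ (n : ℕ) (a b : ℝ) :
    (Dmat (n + 1) a b).submatrix Fin.succ Fin.succ = Dmat n a b := by
  ext i j
  simp [Dmat]

lemma det_Dmat_updateCol_zero_of_tail_eq_zero (n : ℕ) (a b : ℝ) (c : ℕ → ℝ)
    (hc : ∀ k, c (k + 1) = 0) :
    ((Dmat (n + 1) a b).updateCol 0 fun i => c i).det = c 0 * (Dmat n a b).det := by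
  rw [det_succ_column_zero, Fin.sum_univ_succ]
  simp [hc, submatrix_succ_updateCol_zero, Dmat_submatrix_succ_succ]

lemma det_Dmat_updateCol_zero_add_two (n : ℕ) (a b : ℝ) (c : ℕ → ℝ) :
    ((Dmat (n + 2) a b).updateCol 0 fun i => c i).det =
      c 0 * (Dmat (n + 1) a b).det -
        b * ((Dmat (n + 1) a b).updateCol 0 fun i => c (i + 1)).det := by
  have hminor : ((Dmat (n + 2) a b).updateCol 0 fun i => c i).submatrix Fin.succ
      (Fin.succAbove 1) = (Dmat (n + 1) a b).updateCol 0 fun i => c (i + 1) := by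
    ext i j
    rcases j with ⟨_ | j, hj⟩ <;> simp [Dmat, Fin.succAbove, Fin.lt_def, Fin.ext_iff]
  have hrow : ∀ j : Fin n, Dmat (n + 2) a b 0 j.succ.succ = 0 := fun j => by simp [Dmat]
  have hb : Dmat (n + 2) a b 0 1 = b := by simp [Dmat]
  rw [det_succ_row_zero, Fin.sum_univ_succ, Fin.sum_univ_succ, Finset.sum_eq_zero fun j _ => by
    rw [updateCol_ne (Fin.succ_ne_zero _), hrow j, mul_zero, zero_mul]]
  rw [Fin.succAbove_zero, submatrix_succ_updateCol_zero, Dmat_submatrix_succ_succ,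
    Fin.succ_zero_eq_one, hminor, updateCol_self, updateCol_ne (by simp), hb]
  simp only [Fin.val_zero, Fin.val_one, pow_zero, pow_one, add_zero]
  ring

theorem det_Dmat_add_three (n : ℕ) (a b : ℝ) :
    (Dmat (n + 3) a b).det =
      -a * (Dmat (n + 2) a b).det - a * b * (Dmat (n + 1) a b).det - b ^ 3 * (Dmat n a b).det := by
  let c : ℕ → ℝ := fun k => if k = 0 then -a else if k = 1 then a else if k = 2 then -b else 0
  have hD : Dmat (n + 3) a b = (Dmat (n + 3) a b).updateCol 0 fun i => c i := by
    ext i j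
    by_cases hj : j = 0
    · subst hj
      rcases i with ⟨_ | _ | _ | i, hi⟩ <;> simp [Dmat, c]
    · rw [updateCol_ne hj]
  rw [hD, det_Dmat_updateCol_zero_add_two (n + 1),
    det_Dmat_updateCol_zero_add_two n a b fun k => c (k + 1),
    det_Dmat_updateCol_zero_of_tail_eq_zero n a b (fun k => c (k + 1 + 1)) fun k => by simp [c]]
  simp only [c, Nat.reduceAdd, reduceIte, OfNat.ofNat_ne_zero, OfNat.ofNat_ne_one, one_ne_zero]
  ring

lemma det_Dmat_one (a b : ℝ) : (Dmat 1 a b).det = -a := by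
  simp [Dmat]

lemma det_Dmat_two (a b : ℝ) : (Dmat 2 a b).det = a ^ 2 - a * b := by
  rw [det_fin_two]
  simp [Dmat]
  ring

theorem stmt5 (n : ℕ) :
    (Dmat n 3 1).det = (-1 : ℝ) ^ n * ((n : ℝ) + 1) * ((n : ℝ) + 2) / 2 := by
  induction n using Nat.strong_induction_on with
  | _ n ih =>
    match n with
    | 0 => simp
    | 1 => rw [det_Dmat_one]; norm_num
    | 2 => rw [det_Dmat_two]; norm_num
    | k + 3 =>
      rw [det_Dmat_add_three, ih k (by omega), ih (k + 1) (by omega), ih (k + 2) (by omega)]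
      push_cast
      ring
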